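/- arXiv:1212.6714 — 2 statements merged into one kernel-verified Lean document; each statement's English description precedes it below -/
import Mathlib

section
/- Let f : M → N be a submersion between smooth manifolds, y ∈ N, and F = f⁻¹(y). If F is compact and there exists an open neighborhood V₀ of y such that f⁻¹(v) is connected for every v ∈ V₀, then f is proper at y. -/
/-!
Choose a compact `K` with `f⁻¹(y) ⊆ int K`. As `f(K \ int K)` is compact and misses `y`, and
`f(int K)` is a neighbourhood of `y` (a submersion is an open map, by the inverse function
theorem in charts), every fibre near `y` meets `int K` and avoids `K \ int K`; being connected,
it lies in `int K`. Hence a sequence with `f(xₙ) → y` eventually stays in the compact set `K`.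
-/

open Filter Topology Set

section Submersion

variable {𝕜 : Type*} [RCLike 𝕜]
  {E H E' H' : Type*}
  [NormedAddCommGroup E] [NormedSpace 𝕜 E] [CompleteSpace E] [TopologicalSpace H]
  [NormedAddCommGroup E'] [NormedSpace 𝕜 E'] [CompleteSpace E'] [TopologicalSpace H']
  {I : ModelWithCorners 𝕜 E H} {J : ModelWithCorners 𝕜 E' H'}
  [I.Boundaryless] [J.Boundaryless]
  {M N : Type*} [TopologicalSpace M] [ChartedSpace H M] [TopologicalSpace N] [ChartedSpace H' N]
  {n : WithTop ℕ∞} {f : M → N}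

theorem ContMDiffAt.map_nhds_eq_of_surjective_mfderiv {x : M} (hf : ContMDiffAt I J n f x)
    (hn : n ≠ 0) (hsurj : Function.Surjective (mfderiv I J f x)) :
    map f (𝓝 x) = 𝓝 (f x) := by
  set φ := extChartAt I x
  set ψ := extChartAt J (f x)
  set g := writtenInExtChartAt I J x f
  have hg : ContDiffAt 𝕜 n g (φ x) := by
    have := (contMDiffAt_iff.mp hf).2
    rwa [I.range_eq_univ, contDiffWithinAt_univ] at this
  have hderiv : mfderiv I J f x = fderiv 𝕜 g (φ x) := by
    rw [(hf.mdifferentiableAt hn).mfderiv, I.range_eq_univ, fderivWithin_univ]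
  have hg_nhds : map g (𝓝 (φ x)) = 𝓝 (ψ (f x)) := by
    rw [(hg.hasStrictFDerivAt hn).map_nhds_eq_of_surj (by rwa [LinearMap.range_eq_top, ← hderiv])]
    simp only [g, writtenInExtChartAt, Function.comp_apply, φ, ψ, extChartAt_to_inv]
  have hf_charts : ψ.symm ∘ g ∘ φ =ᶠ[𝓝 x] f := by
    filter_upwards [extChartAt_source_mem_nhds (I := I) x,
      hf.continuousAt.preimage_mem_nhds (extChartAt_source_mem_nhds (I := J) (f x))] with z hz hfz
    simp only [g, writtenInExtChartAt, Function.comp_apply, φ, ψ, (extChartAt I x).left_inv hz,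
      (extChartAt J (f x)).left_inv hfz]
  calc map f (𝓝 x) = map ψ.symm (map g (map φ (𝓝 x))) := by
        rw [map_map, map_map, ← map_congr hf_charts]; rfl
    _ = 𝓝 (f x) := by
        rw [map_extChartAt_nhds_of_boundaryless, hg_nhds, ← nhdsWithin_univ, ← J.range_eq_univ,
          map_extChartAt_symm_nhdsWithin_range]

theorem ContMDiff.isOpenMap_of_surjective_mfderiv (hf : ContMDiff I J n f) (hn : n ≠ 0)
    (hsurj : ∀ x, Function.Surjective (mfderiv I J f x)) : IsOpenMap f :=
  isOpenMap_iff_nhds_le.mpr fun x ↦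
    ((hf x).map_nhds_eq_of_surjective_mfderiv hn (hsurj x)).ge

end Submersion

section Topology

variable {X Y : Type*} [TopologicalSpace X] [TopologicalSpace Y] {f : X → Y} {y : Y}

theorem IsCompact.eventually_disjoint_preimage_singleton [T2Space Y] {C : Set X}
    (hC : IsCompact C) (hf : Continuous f) (hy : Disjoint (f ⁻¹' {y}) C) :
    ∀ᶠ v in 𝓝 y, Disjoint (f ⁻¹' {v}) C := by
  have hyC : y ∉ f '' C := fun ⟨z, hzC, hzy⟩ ↦ disjoint_left.mp hy hzy hzC
  filter_upwards [(hC.image hf).isClosed.isOpen_compl.mem_nhds hyC] with v hv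
  exact disjoint_left.mpr fun z hzv hzC ↦ hv ⟨z, hzC, hzv⟩

theorem IsOpenMap.exists_isCompact_eventually_preimage_singleton_subset
    [WeaklyLocallyCompactSpace X] [T2Space X] [T2Space Y] (hfo : IsOpenMap f)
    (hf : Continuous f) (hF : IsCompact (f ⁻¹' {y})) (hne : (f ⁻¹' {y}).Nonempty)
    (hconn : ∀ᶠ v in 𝓝 y, IsPreconnected (f ⁻¹' {v})) :
    ∃ K, IsCompact K ∧ ∀ᶠ v in 𝓝 y, f ⁻¹' {v} ⊆ K := by
  obtain ⟨K, hK, hFK⟩ := exists_compact_superset hF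
  obtain ⟨x, hx : f x = y⟩ := hne
  have hmeet : ∀ᶠ v in 𝓝 y, (f ⁻¹' {v} ∩ interior K).Nonempty := by
    have := hfo.image_mem_nhds (isOpen_interior.mem_nhds (hFK hx))
    rw [hx] at this
    filter_upwards [this] with v ⟨u, hu, huv⟩
    exact ⟨u, huv, hu⟩
  have hfrontier : ∀ᶠ v in 𝓝 y, Disjoint (f ⁻¹' {v}) (K \ interior K) :=
    (hK.diff isOpen_interior).eventually_disjoint_preimage_singleton hf
      (disjoint_left.mpr fun z hz hzK ↦ hzK.2 (hFK hz))
  refine ⟨K, hK, ?_⟩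
  filter_upwards [hconn, hmeet, hfrontier] with v hv hvK hvfr
  have hcover : f ⁻¹' {v} ⊆ interior K ∪ Kᶜ := fun z hz ↦ by
    by_cases hzK : z ∈ K
    · exact .inl (by_contra fun hzi ↦ disjoint_left.mp hvfr hz ⟨hzK, hzi⟩)
    · exact .inr hzK
  exact (hv.subset_left_of_subset_union isOpen_interior hK.isClosed.isOpen_compl
    (disjoint_compl_right.mono_left interior_subset) hcover hvK).trans interior_subset

end Topology

theorem ChartedSpace.firstCountableTopology (H M : Type*) [TopologicalSpace H]
    [FirstCountableTopology H] [TopologicalSpace M] [ChartedSpace H M] :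
    FirstCountableTopology M :=
  ⟨fun x ↦ by
    rw [(chartAt H x).nhds_eq_comap_inf_principal (mem_chart_source H x)]
    infer_instance⟩

theorem submersion_properAt_of_compact_fiber_connected_nearby_fibers_general
    {E H E' H' : Type*}
    [NormedAddCommGroup E] [NormedSpace ℝ E] [FiniteDimensional ℝ E] [TopologicalSpace H]
    [NormedAddCommGroup E'] [NormedSpace ℝ E'] [FiniteDimensional ℝ E'] [TopologicalSpace H']
    (I : ModelWithCorners ℝ E H) (J : ModelWithCorners ℝ E' H')
    [I.Boundaryless] [J.Boundaryless]
    {M N : Type*}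
    [TopologicalSpace M] [ChartedSpace H M] [T2Space M]
    [TopologicalSpace N] [ChartedSpace H' N] [T2Space N]
    (f : M → N) (hf : ContMDiff I J (⊤ : ℕ∞) f)
    (hsub : ∀ x : M, Function.Surjective (mfderiv I J f x))
    (y : N)
    (hF : IsCompact (f ⁻¹' {y}))
    (hconn : ∃ V₀ : Set N, IsOpen V₀ ∧ y ∈ V₀ ∧ ∀ v ∈ V₀, IsConnected (f ⁻¹' {v})) :
    ∀ x : ℕ → M, Tendsto (f ∘ x) atTop (𝓝 y) →
      ∃ (a : M) (φ : ℕ → ℕ), StrictMono φ ∧ Tendsto (x ∘ φ) atTop (𝓝 a) := by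
  intro x hx
  obtain ⟨V₀, hV₀, hyV₀, hconnV⟩ := hconn
  have : LocallyCompactSpace H := I.locallyCompactSpace
  have : LocallyCompactSpace M := ChartedSpace.locallyCompactSpace H M
  have : FirstCountableTopology H := I.isClosedEmbedding.isInducing.firstCountableTopology
  have : FirstCountableTopology M := ChartedSpace.firstCountableTopology H M
  have hfo : IsOpenMap f := hf.isOpenMap_of_surjective_mfderiv (by simp) hsub
  obtain ⟨K, hK, hfiber⟩ := hfo.exists_isCompact_eventually_preimage_singleton_subset
    hf.continuous hF (hconnV y hyV₀).nonempty
    (eventually_of_mem (hV₀.mem_nhds hyV₀) fun v hv ↦ (hconnV v hv).isPreconnected)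
  have hxK : ∀ᶠ n in atTop, x n ∈ K := (hx.eventually hfiber).mono fun n hn ↦ hn rfl
  obtain ⟨a, -, φ, hφ, hlim⟩ := hK.tendsto_subseq' hxK.frequently
  exact ⟨a, φ, hφ, hlim⟩

/-- Let `f : M → N` be a smooth submersion between finite-dimensional boundaryless
second countable Hausdorff manifolds, `y ∈ N`. If the fiber `f⁻¹(y)` is compact and the
nearby fibers are connected, then `f` is proper at `y`: every sequence `(xₙ)` with
`f(xₙ) → y` admits a convergent subsequence. -/
theorem submersion_properAt_of_compact_fiber_connected_nearby_fibers
    {E H E' H' : Type*}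
    [NormedAddCommGroup E] [NormedSpace ℝ E] [FiniteDimensional ℝ E] [TopologicalSpace H]
    [NormedAddCommGroup E'] [NormedSpace ℝ E'] [FiniteDimensional ℝ E'] [TopologicalSpace H']
    (I : ModelWithCorners ℝ E H) (J : ModelWithCorners ℝ E' H')
    [I.Boundaryless] [J.Boundaryless]
    {M N : Type*}
    [TopologicalSpace M] [ChartedSpace H M] [IsManifold I (⊤ : ℕ∞) M]
    [T2Space M] [SecondCountableTopology M]
    [TopologicalSpace N] [ChartedSpace H' N] [IsManifold J (⊤ : ℕ∞) N]
    [T2Space N] [SecondCountableTopology N]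
    (f : M → N) (hf : ContMDiff I J (⊤ : ℕ∞) f)
    (hsub : ∀ x : M, Function.Surjective (mfderiv I J f x))
    (y : N)
    (hF : IsCompact (f ⁻¹' {y}))
    (hconn : ∃ V₀ : Set N, IsOpen V₀ ∧ y ∈ V₀ ∧ ∀ v ∈ V₀, IsConnected (f ⁻¹' {v})) :
    ∀ x : ℕ → M, Tendsto (f ∘ x) atTop (𝓝 y) →
      ∃ (a : M) (φ : ℕ → ℕ), StrictMono φ ∧ Tendsto (x ∘ φ) atTop (𝓝 a) :=
  submersion_properAt_of_compact_fiber_connected_nearby_fibers_general I J f hf hsub y hF hconn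
end

section
/- Let U ⊆ ℝⁿ be an open set containing 0 and let ψ : U → ℝⁿ be a smooth map with ψ(0) = 0 whose differential Dψ₀ at 0 is invertible. Then there exists ε > 0 such that for every r with 0 < r ≤ ε, the open ball B(0, r) is contained in U and the image ψ(B(0, r)) is star-shaped at 0, i.e., for every point p ∈ ψ(B(0, r)) and every t ∈ [0, 1], the point t·p belongs to ψ(B(0, r)). -/
open Set Metric

/-- Auxiliary version: if `g` is smooth on an open set `U ∋ 0`, `g 0 = 0` and
`fderiv ℝ g 0 = id`, then `g` maps all small balls around `0` to star-shaped sets. -/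
lemma aux_starshaped_of_fderiv_id {E : Type*} [NormedAddCommGroup E] [NormedSpace ℝ E]
    [FiniteDimensional ℝ E] (U : Set E) (g : E → E) (hU : IsOpen U) (h0U : (0 : E) ∈ U)
    (hg : ContDiffOn ℝ (⊤ : ℕ∞) g U) (hg0 : g 0 = 0)
    (hDg : fderiv ℝ g 0 = ContinuousLinearMap.id ℝ E) :
    ∃ ε > (0 : ℝ), ball (0 : E) ε ⊆ U ∧ ∀ r : ℝ, 0 < r → r ≤ ε →
      ∀ q ∈ ball (0 : E) r, ∀ t ∈ Icc (0 : ℝ) 1, t • g q ∈ g '' ball (0 : E) r := by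
  have hd : ∀ x ∈ U, DifferentiableAt ℝ g x := fun x hx =>
    (hg.contDiffAt (hU.mem_nhds hx)).differentiableAt (by simp)
  -- continuity of the derivative
  have hcont : ContinuousOn (fun x => fderiv ℝ g x) U := by
    have h1 := hg.continuousOn_fderivWithin hU.uniqueDiffOn (by simp)
    exact h1.congr fun x hx => (fderivWithin_of_isOpen hU hx).symm
  have hat : ContinuousAt (fun x => fderiv ℝ g x) 0 := hcont.continuousAt (hU.mem_nhds h0U)
  have h2 : ContinuousAt (fun x => ‖fderiv ℝ g x - ContinuousLinearMap.id ℝ E‖) 0 :=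
    (hat.sub continuousAt_const).norm
  have h2' : Filter.Tendsto (fun x => ‖fderiv ℝ g x - ContinuousLinearMap.id ℝ E‖)
      (nhds 0) (nhds 0) := by
    have := h2.tendsto
    rwa [hDg, sub_self, norm_zero] at this
  have hev : ∀ᶠ x in nhds (0 : E),
      ‖fderiv ℝ g x - ContinuousLinearMap.id ℝ E‖ < 1/4 :=
    h2'.eventually (gt_mem_nhds (by norm_num : (0:ℝ) < 1/4))
  have hev2 : ∀ᶠ x in nhds (0 : E),
      ‖fderiv ℝ g x - ContinuousLinearMap.id ℝ E‖ < 1/4 ∧ x ∈ U :=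
    hev.and (hU.mem_nhds h0U)
  rw [Metric.eventually_nhds_iff] at hev2
  obtain ⟨ε, hε, hεball⟩ := hev2
  have hball : ball (0:E) ε ⊆ U := fun x hx => (hεball (mem_ball.mp hx)).2
  have hder : ∀ x ∈ ball (0:E) ε, ‖fderiv ℝ g x - ContinuousLinearMap.id ℝ E‖ ≤ 1/4 :=
    fun x hx => (hεball (mem_ball.mp hx)).1.le
  -- mean value inequality
  have hlip : ∀ x ∈ ball (0:E) ε, ∀ y ∈ ball (0:E) ε, ‖g y - g x - (y - x)‖ ≤ 1/4 * ‖y - x‖ := by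
    intro x hx y hy
    have := (convex_ball (0:E) ε).norm_image_sub_le_of_norm_hasFDerivWithin_le'
      (fun z hz => ((hd z (hball hz)).hasFDerivAt).hasFDerivWithinAt) hder hx hy
    simpa using this
  -- key static estimate
  have key : ∀ t ∈ Icc (0:ℝ) 1, ∀ p ∈ ball (0:E) ε, ∀ x ∈ ball (0:E) ε,
      g x = t • g p → ‖x‖ ≤ ‖p‖ := by
    rintro t ⟨ht0, ht1⟩ p hp x hx hgx
    have h0ε : (0:E) ∈ ball (0:E) ε := mem_ball_self hε
    have h2 : ‖g p - p‖ ≤ 1/4 * ‖p‖ := by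
      have := hlip 0 h0ε p hp
      simpa [hg0] using this
    have hgp : ‖g p‖ ≤ 5/4 * ‖p‖ := by
      have h3 : ‖g p‖ ≤ ‖g p - p‖ + ‖p‖ := by
        have := norm_add_le (g p - p) p
        rwa [sub_add_cancel] at this
      linarith
    have ha : ‖g p - g x - (p - x)‖ ≤ 1/4 * ‖p - x‖ := hlip x hx p hp
    have hb : g p - g x = (1 - t) • g p := by rw [hgx, sub_smul, one_smul]
    rw [hb] at ha
    have hn : ‖(1-t) • g p‖ = (1-t) * ‖g p‖ := by
      rw [norm_smul, Real.norm_eq_abs, abs_of_nonneg (by linarith)]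
    have h1 : ‖p - x‖ ≤ (1 - t) * ‖g p‖ + 1/4 * ‖p - x‖ := by
      have h := norm_sub_le ((1-t) • g p) ((1-t) • g p - (p - x))
      rw [sub_sub_cancel] at h
      linarith
    have h4 : ‖p - x‖ ≤ 4/3 * ((1-t) * ‖g p‖) := by linarith
    have hdec : x - t • p = (1 - t) • (p - g p) + ((1 - t) • g p - (p - x)) := by module
    have hx_tp : ‖x - t • p‖ ≤ (1 - t) * ‖p‖ := by
      have hstep : ‖x - t • p‖ ≤ ‖(1-t) • (p - g p)‖ + ‖(1-t) • g p - (p - x)‖ := by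
        rw [hdec]; exact norm_add_le _ _
      have hn2 : ‖(1-t) • (p - g p)‖ = (1-t) * ‖g p - p‖ := by
        rw [norm_smul, Real.norm_eq_abs, abs_of_nonneg (by linarith), norm_sub_rev]
      nlinarith [norm_nonneg (g p), norm_nonneg p, norm_nonneg (p - x)]
    have hfin : ‖x‖ ≤ ‖x - t • p‖ + ‖t • p‖ := by
      have := norm_add_le (x - t • p) (t • p)
      rwa [sub_add_cancel] at this
    have hn3 : ‖t • p‖ = t * ‖p‖ := by
      rw [norm_smul, Real.norm_eq_abs, abs_of_nonneg ht0]
    nlinarith [norm_nonneg p]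
  -- g is locally an open map on the ball
  have hopen : ∀ x ∈ ball (0:E) ε, Filter.map g (nhds x) = nhds (g x) := by
    intro x hx
    have hinj : Function.Injective (fderiv ℝ g x) := by
      intro u v huv
      by_contra hne
      have hne' : u - v ≠ 0 := sub_ne_zero.mpr hne
      have h1 : fderiv ℝ g x (u - v) = 0 := by rw [map_sub, huv, sub_self]
      have h2 : ‖fderiv ℝ g x (u-v) - (u-v)‖ ≤ 1/4 * ‖u - v‖ := by
        have h3 := hder x hx
        have h5 := (fderiv ℝ g x - ContinuousLinearMap.id ℝ E).le_opNorm (u - v)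
        simp only [ContinuousLinearMap.sub_apply, ContinuousLinearMap.id_apply] at h5
        nlinarith [norm_nonneg (u - v)]
      rw [h1, zero_sub, norm_neg] at h2
      have h5 : 0 < ‖u - v‖ := norm_pos_iff.mpr hne'
      linarith
    have hbij : Function.Bijective (fderiv ℝ g x) :=
      ⟨hinj, (LinearMap.injective_iff_surjective
        (f := ((fderiv ℝ g x : E →L[ℝ] E) : E →ₗ[ℝ] E))).mp hinj⟩
    let eA : E ≃L[ℝ] E :=
      (LinearEquiv.ofBijective ((fderiv ℝ g x : E →L[ℝ] E) : E →ₗ[ℝ] E) hbij).toContinuousLinearEquiv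
    have hstrict : HasStrictFDerivAt g (fderiv ℝ g x) x :=
      (hg.contDiffAt (hU.mem_nhds (hball hx))).hasStrictFDerivAt (by simp)
    have hcoe : (eA : E →L[ℝ] E) = fderiv ℝ g x := by ext v; rfl
    have hstrict' : HasStrictFDerivAt g ((eA : E ≃L[ℝ] E) : E →L[ℝ] E) x := by
      rw [hcoe]; exact hstrict
    exact hstrict'.map_nhds_eq_of_equiv
  refine ⟨ε, hε, hball, ?_⟩
  intro r hr hrε q hq t ht
  have hqr : ‖q‖ < r := mem_ball_zero_iff.mp hq
  have hqε : q ∈ ball (0:E) ε := mem_ball_zero_iff.mpr (lt_of_lt_of_le hqr hrε)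
  by_cases hgq : g q = 0
  · exact ⟨0, mem_ball_self hr, by rw [hg0, hgq, smul_zero]⟩
  set R : ℝ := (‖q‖ + r) / 2 with hRdef
  have hqR : ‖q‖ < R := by rw [hRdef]; linarith
  have hRr : R < r := by rw [hRdef]; linarith
  have hR0 : 0 < R := by have := norm_nonneg q; rw [hRdef]; linarith
  have hsub : closedBall (0:E) R ⊆ ball (0:E) ε := fun x hx => by
    rw [mem_closedBall_zero_iff] at hx
    rw [mem_ball_zero_iff]
    linarith
  have hsubU : closedBall (0:E) R ⊆ U := hsub.trans hball
  set S := g '' closedBall (0:E) R with hSdef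
  have hS : IsCompact S := (isCompact_closedBall _ _).image_of_continuousOn (hg.continuousOn.mono hsubU)
  set T : Set ℝ := Icc (0:ℝ) 1 ∩ (fun s : ℝ => s • g q) ⁻¹' S with hTdef
  have hTclosed : IsClosed T :=
    isClosed_Icc.inter (hS.isClosed.preimage (continuous_id.smul continuous_const))
  have h1T : (1:ℝ) ∈ T :=
    ⟨⟨zero_le_one, le_refl 1⟩, ⟨q, mem_closedBall_zero_iff.mpr hqR.le, by simp⟩⟩
  have hTgoal : ∀ s ∈ T, s • g q ∈ g '' ball (0:E) r := by
    rintro s ⟨hs, x, hxR, hgx⟩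
    have hxε : x ∈ ball (0:E) ε := hsub hxR
    have hxq : ‖x‖ ≤ ‖q‖ := key s hs q hqε x hxε hgx
    exact ⟨x, mem_ball_zero_iff.mpr (lt_of_le_of_lt hxq hqr), hgx⟩
  refine hTgoal t ?_
  by_contra ht0T
  set T' := T ∩ Icc t 1 with hT'def
  have hT'closed : IsClosed T' := hTclosed.inter isClosed_Icc
  have hT'ne : T'.Nonempty := ⟨1, h1T, ⟨ht.2, le_refl 1⟩⟩
  have hT'bdd : BddBelow T' := ⟨t, fun u hu => hu.2.1⟩
  have hsmem : sInf T' ∈ T' := hT'closed.csInf_mem hT'ne hT'bdd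
  set s := sInf T' with hsdef
  have hst : t < s := lt_of_le_of_ne hsmem.2.1 (fun h => ht0T (by rw [h]; exact hsmem.1))
  obtain ⟨x, hxR, hgx⟩ := hsmem.1.2
  have hxε : x ∈ ball (0:E) ε := hsub hxR
  have hxq : ‖x‖ ≤ ‖q‖ := key s hsmem.1.1 q hqε x hxε hgx
  have hxR' : ‖x‖ < R := lt_of_le_of_lt hxq hqR
  have hmap := hopen x hxε
  have himg : g '' ball x (R - ‖x‖) ∈ nhds (g x) := by
    rw [← hmap]; exact Filter.image_mem_map (ball_mem_nhds x (by linarith))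
  obtain ⟨δ', hδ'pos, hδ'sub⟩ := Metric.mem_nhds_iff.mp himg
  have hgqn : 0 < ‖g q‖ := norm_pos_iff.mpr hgq
  set m := min (δ' / (2 * ‖g q‖)) ((s - t)/2) with hmdef
  have hm0 : 0 < m := lt_min (by positivity) (by linarith)
  have hm2 : m ≤ (s - t)/2 := min_le_right _ _
  have hm1 : m ≤ δ' / (2 * ‖g q‖) := min_le_left _ _
  set u := s - m with hudef
  have hu1 : u < s := by rw [hudef]; linarith
  have hut : t < u := by rw [hudef]; linarith
  have huIcc : u ∈ Icc (0:ℝ) 1 :=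
    ⟨le_of_lt (lt_of_le_of_lt ht.1 hut), le_trans hu1.le hsmem.1.1.2⟩
  have hdist : dist (u • g q) (g x) < δ' := by
    rw [dist_eq_norm, hgx]
    have heq : u • g q - s • g q = (u - s) • g q := (sub_smul u s (g q)).symm
    rw [heq, norm_smul, Real.norm_eq_abs]
    have habs : |u - s| = m := by
      rw [abs_of_nonpos (by linarith), hudef]; ring
    rw [habs]
    have hc : m * ‖g q‖ ≤ (δ' / (2 * ‖g q‖)) * ‖g q‖ :=
      mul_le_mul_of_nonneg_right hm1 (norm_nonneg _)
    have hc2 : (δ' / (2 * ‖g q‖)) * ‖g q‖ = δ' / 2 := by field_simp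
    linarith
  have hsubball : ball x (R - ‖x‖) ⊆ closedBall (0:E) R := fun y hy => by
    rw [mem_closedBall_zero_iff]
    have h1 : ‖y - x‖ < R - ‖x‖ := by rw [← dist_eq_norm]; exact mem_ball.mp hy
    have h2 : ‖y‖ ≤ ‖y - x‖ + ‖x‖ := by
      have := norm_add_le (y - x) x
      rwa [sub_add_cancel] at this
    linarith
  have humem : u • g q ∈ S := image_mono (f := g) hsubball (hδ'sub (mem_ball.mpr hdist))
  have huT' : u ∈ T' := ⟨⟨huIcc, humem⟩, ⟨hut.le, huIcc.2⟩⟩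
  have : s ≤ u := csInf_le hT'bdd huT'
  linarith

/-- If `ψ : U → ℝⁿ` is smooth on an open set `U ∋ 0`, `ψ(0) = 0`, and the differential of `ψ`
at `0` is invertible, then `ψ` maps all sufficiently small open balls centered at `0` to
sets that are star-shaped at `0`. -/
theorem smooth_map_image_small_ball_starShaped
    {n : ℕ} (U : Set (EuclideanSpace ℝ (Fin n)))
    (ψ : EuclideanSpace ℝ (Fin n) → EuclideanSpace ℝ (Fin n))
    (hU : IsOpen U) (h0U : (0 : EuclideanSpace ℝ (Fin n)) ∈ U)
    (hψ : ContDiffOn ℝ (⊤ : ℕ∞) ψ U) (hψ0 : ψ 0 = 0)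
    (hD : Function.Bijective (fderiv ℝ ψ 0)) :
    ∃ ε > (0 : ℝ), ∀ r : ℝ, 0 < r → r ≤ ε →
      ball (0 : EuclideanSpace ℝ (Fin n)) r ⊆ U ∧
      ∀ p ∈ ψ '' ball (0 : EuclideanSpace ℝ (Fin n)) r, ∀ t ∈ Icc (0 : ℝ) 1,
        t • p ∈ ψ '' ball (0 : EuclideanSpace ℝ (Fin n)) r := by
  let e : EuclideanSpace ℝ (Fin n) ≃L[ℝ] EuclideanSpace ℝ (Fin n) :=
    (LinearEquiv.ofBijective ((fderiv ℝ ψ 0 :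
      EuclideanSpace ℝ (Fin n) →ₗ[ℝ] EuclideanSpace ℝ (Fin n))) hD).toContinuousLinearEquiv
  set g : EuclideanSpace ℝ (Fin n) → EuclideanSpace ℝ (Fin n) :=
    fun x => e.symm (ψ x) with hgdef
  have hg0 : g 0 = 0 := by simp [hgdef, hψ0]
  have hgsm : ContDiffOn ℝ (⊤ : ℕ∞) g U := e.symm.contDiff.comp_contDiffOn hψ
  have hDg : fderiv ℝ g 0 = ContinuousLinearMap.id ℝ (EuclideanSpace ℝ (Fin n)) := by
    have h1 : fderiv ℝ (⇑(e.symm) ∘ ψ) 0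
        = ((e.symm : EuclideanSpace ℝ (Fin n) →L[ℝ] EuclideanSpace ℝ (Fin n))).comp
          (fderiv ℝ ψ 0) := e.symm.comp_fderiv
    have h2 : g = ⇑(e.symm) ∘ ψ := rfl
    refine ContinuousLinearMap.ext fun v => ?_
    rw [h2, h1]
    show e.symm (fderiv ℝ ψ 0 v) = v
    exact e.symm_apply_apply v
  obtain ⟨ε, hε, hball, hmain⟩ := aux_starshaped_of_fderiv_id U g hU h0U hgsm hg0 hDg
  refine ⟨ε, hε, fun r hr hrε => ⟨(ball_subset_ball hrε).trans hball, ?_⟩⟩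
  rintro p ⟨q, hq, rfl⟩ t ht
  obtain ⟨x, hxball, hgx⟩ := hmain r hr hrε q hq t ht
  refine ⟨x, hxball, ?_⟩
  have h1 : ψ x = e (g x) := (e.apply_symm_apply (ψ x)).symm
  rw [h1, hgx, map_smul]
  congr 1
  exact e.apply_symm_apply (ψ q)
end
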